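/- Let G be a finite undirected connected simple graph on N ≥ 2 vertices with combinatorial Laplacian L = D − A and eigenvalues 0 = λ₁ < λ₂ ≤ ⋯ ≤ λ_N. Let Λ : [0, ∞) → ℝ be continuous and let z : [0, ∞) → ℝ^N be differentiable with z'(t) = −L z(t) + Λ(t) z(t), z(0) ≠ 0, and 1ᵀz(0) = 0. If the orthogonal projection of z(0) onto the λ₂-eigenspace of L is nonzero, then z(t)/‖z(t)‖ converges as t → ∞ to a unit vector w satisfying Lw = λ₂w, i.e., to a normalized Fiedler vector of L. -/

import Mathlib

open Matrix Finset Set Filter SimpleGraph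

lemma expand_basis {N : ℕ} (v : Fin N → Fin N → ℝ)
    (horth : ∀ j k, v j ⬝ᵥ v k = if j = k then 1 else 0) (x : Fin N → ℝ) :
    x = ∑ k, (x ⬝ᵥ v k) • v k := by
  have hVVt : (Matrix.of v) * (Matrix.of v)ᵀ = 1 := by
    ext j k
    simpa [Matrix.mul_apply, dotProduct, Matrix.one_apply] using horth j k
  have hVtV : (Matrix.of v)ᵀ * (Matrix.of v) = 1 := mul_eq_one_comm.mp hVVt
  funext i
  have h1 : ∀ j, (∑ k, v k j * v k i) = if j = i then 1 else 0 := by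
    intro j
    have := congrFun (congrFun hVtV j) i
    simpa [Matrix.mul_apply, Matrix.transpose_apply, Matrix.one_apply] using this
  calc x i = ∑ j, x j * (if j = i then 1 else 0) := by simp
    _ = ∑ j, x j * ∑ k, v k j * v k i := by
        refine Finset.sum_congr rfl fun j _ => ?_; rw [h1]
    _ = ∑ j, ∑ k, x j * (v k j * v k i) := by
        refine Finset.sum_congr rfl fun j _ => ?_; rw [Finset.mul_sum]
    _ = ∑ k, ∑ j, x j * (v k j * v k i) := Finset.sum_comm
    _ = (∑ k, (x ⬝ᵥ v k) • v k) i := by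
        simp [dotProduct, Finset.sum_apply, Finset.sum_mul, mul_assoc]

lemma ker_const {N : ℕ} (G : SimpleGraph (Fin N)) [DecidableRel G.Adj] (hconn : G.Connected)
    (u : Fin N → ℝ)
    (hu : (Matrix.diagonal (fun i => (G.degree i : ℝ)) - G.adjMatrix ℝ).mulVec u = 0) :
    ∀ i j, u i = u j := by
  have hadj : ∀ i j, G.Adj i j → u i = u j := by
    have hquad : ∑ i, ∑ j, (G.adjMatrix ℝ) i j * (u i - u j) ^ 2 = 0 := by
      have h0 : ∀ i, ((Matrix.diagonal (fun i => (G.degree i : ℝ)) - G.adjMatrix ℝ).mulVec u) i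
          = 0 := fun i => congrFun hu i
      have hdeg : ∀ i, (∑ j, (G.adjMatrix ℝ) i j) = (G.degree i : ℝ) := by
        intro i
        simpa [Matrix.mulVec, dotProduct] using
          (SimpleGraph.adjMatrix_mulVec_const_apply (α := ℝ) (a := 1) (v := i))
      have hA : ∀ i, ∑ j, (G.adjMatrix ℝ) i j * u j = (G.degree i : ℝ) * u i := by
        intro i
        have h := h0 i
        rw [Matrix.sub_mulVec, Pi.sub_apply, Matrix.mulVec_diagonal, sub_eq_zero] at h
        simpa [Matrix.mulVec, dotProduct] using h.symm
      have hsymm : ∀ i j, (G.adjMatrix ℝ) i j = (G.adjMatrix ℝ) j i := by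
        intro i j; simp [SimpleGraph.adjMatrix_apply, G.adj_comm]
      have expand : ∀ i j, (G.adjMatrix ℝ) i j * (u i - u j) ^ 2
          = (G.adjMatrix ℝ) i j * u i * u i - 2 * ((G.adjMatrix ℝ) i j * u j) * u i
            + (G.adjMatrix ℝ) i j * u j * u j := by intro i j; ring
      calc ∑ i, ∑ j, (G.adjMatrix ℝ) i j * (u i - u j) ^ 2
          = ∑ i, ((∑ j, (G.adjMatrix ℝ) i j) * u i * u i
              - 2 * (∑ j, (G.adjMatrix ℝ) i j * u j) * u i
              + ∑ j, (G.adjMatrix ℝ) i j * u j * u j) := by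
            refine Finset.sum_congr rfl fun i _ => ?_
            rw [Finset.sum_mul, Finset.sum_mul, Finset.mul_sum, Finset.sum_mul,
              ← Finset.sum_sub_distrib, ← Finset.sum_add_distrib]
            exact Finset.sum_congr rfl fun j _ => by ring
        _ = ∑ i, (- ((G.degree i : ℝ) * u i * u i) + ∑ j, (G.adjMatrix ℝ) i j * u j * u j) := by
            refine Finset.sum_congr rfl fun i _ => ?_
            rw [hdeg, hA]; ring
        _ = 0 := by
            rw [Finset.sum_add_distrib]
            have hswap : ∑ i, ∑ j, (G.adjMatrix ℝ) i j * u j * u j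
                = ∑ j, ∑ i, (G.adjMatrix ℝ) i j * u j * u j := Finset.sum_comm
            rw [hswap]
            have h2 : ∀ j, ∑ i, (G.adjMatrix ℝ) i j * u j * u j
                = (G.degree j : ℝ) * u j * u j := by
              intro j
              rw [← Finset.sum_mul, ← Finset.sum_mul]
              congr 2
              rw [← hdeg j]
              exact Finset.sum_congr rfl fun i _ => hsymm i j
            rw [Finset.sum_congr rfl fun j _ => h2 j]
            simp
    intro i j hij
    have hnneg : ∀ p ∈ (Finset.univ : Finset (Fin N)), ∀ q ∈ (Finset.univ : Finset (Fin N)),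
        (0:ℝ) ≤ (G.adjMatrix ℝ) p q * (u p - u q) ^ 2 := by
      intro p _ q _
      have : (0:ℝ) ≤ (G.adjMatrix ℝ) p q := by simp [SimpleGraph.adjMatrix_apply]; positivity
      positivity
    have hzero : (G.adjMatrix ℝ) i j * (u i - u j) ^ 2 = 0 := by
      have h1 : ∑ p, ∑ q, (G.adjMatrix ℝ) p q * (u p - u q) ^ 2 = 0 := hquad
      have h2 : ∀ p ∈ (Finset.univ : Finset (Fin N)),
          (0:ℝ) ≤ ∑ q, (G.adjMatrix ℝ) p q * (u p - u q) ^ 2 := fun p hp =>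
        Finset.sum_nonneg (fun q hq => hnneg p hp q hq)
      have h3 : ∑ q, (G.adjMatrix ℝ) i q * (u i - u q) ^ 2 = 0 :=
        (Finset.sum_eq_zero_iff_of_nonneg h2).mp h1 i (Finset.mem_univ i)
      exact (Finset.sum_eq_zero_iff_of_nonneg (fun q hq => hnneg i (Finset.mem_univ i) q hq)).mp
        h3 j (Finset.mem_univ j)
    have hAij : (G.adjMatrix ℝ) i j = 1 := by simp [SimpleGraph.adjMatrix_apply, hij]
    rw [hAij, one_mul, pow_eq_zero_iff (by norm_num)] at hzero
    linarith [sub_eq_zero.mp hzero]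
  intro i j
  obtain ⟨p⟩ := hconn.preconnected i j
  induction p with
  | nil => rfl
  | cons h p ih => exact (hadj _ _ h).trans ih

lemma sum_smul_dotProduct {N : ℕ} (a : Fin N → ℝ) (v : Fin N → Fin N → ℝ) (w : Fin N → ℝ) :
    (∑ k, a k • v k) ⬝ᵥ w = ∑ k, a k * (v k ⬝ᵥ w) := by
  simp only [dotProduct, Finset.sum_apply, Pi.smul_apply, smul_eq_mul, Finset.sum_mul,
    Finset.mul_sum, mul_assoc]
  exact Finset.sum_comm

/-- if moreover the orthogonal projection of `z(0)` onto the
`λ₂`-eigenspace of `L` is nonzero, the normalized trajectory converges to a normalized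
Fiedler vector (a unit eigenvector for `λ₂`). -/
theorem normalized_trajectory_converges_to_fiedler (N : ℕ) (hN : 2 ≤ N)
    (G : SimpleGraph (Fin N)) [DecidableRel G.Adj] (hconn : G.Connected)
    (L : Matrix (Fin N) (Fin N) ℝ)
    (hL : L = Matrix.diagonal (fun i => (G.degree i : ℝ)) - G.adjMatrix ℝ)
    (lam : Fin N → ℝ) (v : Fin N → (Fin N → ℝ))
    (hmono : Monotone lam)
    (horth : ∀ j k, v j ⬝ᵥ v k = if j = k then 1 else 0)
    (heig : ∀ k, L.mulVec (v k) = lam k • v k)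
    (hlam0 : lam ⟨0, by omega⟩ = 0)
    (hgap : lam ⟨0, by omega⟩ < lam ⟨1, by omega⟩)
    (Λ : ℝ → ℝ) (hΛ : ContinuousOn Λ (Set.Ici 0))
    (z : ℝ → (Fin N → ℝ))
    (hderiv : ∀ t ∈ Set.Ici (0 : ℝ),
      HasDerivWithinAt z (-(L.mulVec (z t)) + Λ t • z t) (Set.Ici 0) t)
    (hz0 : z 0 ≠ 0) (hsum0 : ∑ i, z 0 i = 0)
    (hproj : ∃ k : Fin N, lam k = lam ⟨1, by omega⟩ ∧ z 0 ⬝ᵥ v k ≠ 0) :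
    ∃ w : Fin N → ℝ, w ⬝ᵥ w = 1 ∧
      L.mulVec w = lam ⟨1, by omega⟩ • w ∧
      Filter.Tendsto (fun t => (Real.sqrt (z t ⬝ᵥ z t))⁻¹ • z t)
        Filter.atTop (nhds w) := by
  have h1N : (1:ℕ) < N := by omega
  have h0N : (0:ℕ) < N := by omega
  -- extended Λ
  have hΛ'cont : Continuous (fun t : ℝ => Λ (max t 0)) := by
    have hmax : Continuous fun t : ℝ => (⟨max t 0, le_max_right t 0⟩ : Set.Ici (0:ℝ)) :=
      Continuous.subtype_mk (continuous_id.max continuous_const) _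
    exact (continuousOn_iff_continuous_restrict.mp hΛ).comp hmax
  have hΛ'eq : ∀ t : ℝ, 0 ≤ t → Λ (max t 0) = Λ t := fun t ht => by
    rw [max_eq_left ht]
  have hI : ∀ t : ℝ, HasDerivAt (fun r => ∫ s in (0:ℝ)..r, Λ (max s 0)) (Λ (max t 0)) t :=
    fun t => (hΛ'cont.integral_hasStrictDerivAt 0 t).hasDerivAt
  have hI0 : (∫ s in (0:ℝ)..(0:ℝ), Λ (max s 0)) = 0 := intervalIntegral.integral_same
  -- symmetry of L
  have hLsymm : Lᵀ = L := by
    rw [hL]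
    rw [Matrix.transpose_sub, Matrix.diagonal_transpose, SimpleGraph.transpose_adjMatrix]
  -- key identity
  have key : ∀ k : Fin N, ∀ t : ℝ, 0 ≤ t →
      z t ⬝ᵥ v k = Real.exp ((∫ s in (0:ℝ)..t, Λ (max s 0)) - lam k * t) * (z 0 ⬝ᵥ v k) := by
    intro k t ht
    have hφd : ∀ s : ℝ, 0 ≤ s → HasDerivWithinAt
        (fun r => Real.exp (lam k * r - ∫ x in (0:ℝ)..r, Λ (max x 0)) * (z r ⬝ᵥ v k))
        0 (Set.Ici 0) s := by
      intro s hs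
      have hzc := hderiv s hs
      have hg : HasDerivWithinAt (fun r => z r ⬝ᵥ v k)
          ((-(L.mulVec (z s)) + Λ s • z s) ⬝ᵥ v k) (Set.Ici 0) s := by
        simp only [dotProduct]
        exact HasDerivWithinAt.fun_sum fun i _ =>
          ((hasDerivWithinAt_pi.mp hzc) i).mul_const (v k i)
      have hdp : (-(L.mulVec (z s)) + Λ s • z s) ⬝ᵥ v k
          = (Λ s - lam k) * (z s ⬝ᵥ v k) := by
        rw [add_dotProduct, neg_dotProduct, smul_dotProduct, smul_eq_mul]
        have hswap : L.mulVec (z s) ⬝ᵥ v k = z s ⬝ᵥ L.mulVec (v k) := by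
          rw [dotProduct_comm, Matrix.dotProduct_mulVec, ← Matrix.mulVec_transpose,
            hLsymm, dotProduct_comm]
        rw [hswap, heig k, dotProduct_smul, smul_eq_mul]
        ring
      have hlin : HasDerivAt (fun r => lam k * r - ∫ x in (0:ℝ)..r, Λ (max x 0))
          (lam k - Λ (max s 0)) s := by
        simpa using ((hasDerivAt_id s).const_mul (lam k)).fun_sub (hI s)
      have hexp := hlin.exp
      have hmul := (hexp.hasDerivWithinAt).fun_mul hg
      refine hmul.congr_deriv ?_
      rw [hdp, hΛ'eq s hs]
      ring
    have hφcont : ContinuousOn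
        (fun r => Real.exp (lam k * r - ∫ x in (0:ℝ)..r, Λ (max x 0)) * (z r ⬝ᵥ v k))
        (Set.Ici 0) := fun s hs => (hφd s hs).continuousWithinAt
    have hconst := constant_of_has_deriv_right_zero (a := 0) (b := t)
      (hφcont.mono Set.Icc_subset_Ici_self)
      (fun x hx => (hφd x hx.1).mono (Set.Ici_subset_Ici.mpr hx.1))
    have hφt := hconst t ⟨ht, le_refl t⟩
    rw [mul_zero, hI0, sub_zero, Real.exp_zero, one_mul] at hφt
    have hne := Real.exp_ne_zero (lam k * t - (∫ s in (0:ℝ)..t, Λ (max s 0)))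
    rw [show (∫ s in (0:ℝ)..t, Λ (max s 0)) - lam k * t
        = -(lam k * t - ∫ s in (0:ℝ)..t, Λ (max s 0)) by ring, Real.exp_neg,
      inv_mul_eq_div, eq_div_iff hne, mul_comm]
    exact hφt
  -- the coefficient on the constant eigenvector vanishes
  have hc0 : z 0 ⬝ᵥ v ⟨0, h0N⟩ = 0 := by
    have hlam0' : lam ⟨0, h0N⟩ = 0 := hlam0
    have hv0 : L.mulVec (v ⟨0, h0N⟩) = 0 := by
      rw [heig, hlam0', zero_smul]
    have hcst := ker_const G hconn (v ⟨0, h0N⟩) (by rw [← hL]; exact hv0)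
    have hconst : z 0 ⬝ᵥ v ⟨0, h0N⟩ = (∑ i, z 0 i) * v ⟨0, h0N⟩ ⟨0, h0N⟩ := by
      rw [Finset.sum_mul]
      exact Finset.sum_congr rfl fun i _ => by rw [hcst i ⟨0, h0N⟩]
    rw [hconst, hsum0, zero_mul]
  obtain ⟨k0, hk0lam0, hk0c⟩ := hproj
  have hk0lam : lam k0 = lam ⟨1, h1N⟩ := hk0lam0
  -- z t in terms of the slow variable
  have hz_eq : ∀ t : ℝ, 0 ≤ t → z t =
      Real.exp ((∫ s in (0:ℝ)..t, Λ (max s 0)) - lam ⟨1, h1N⟩ * t) •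
        ∑ k, (Real.exp ((lam ⟨1, h1N⟩ - lam k) * t) * (z 0 ⬝ᵥ v k)) • v k := by
    intro t ht
    rw [Finset.smul_sum]
    have hexp := expand_basis v horth (z t)
    rw [hexp]
    refine Finset.sum_congr rfl fun k _ => ?_
    rw [key k t ht, smul_smul, ← mul_assoc, ← Real.exp_add]
    congr 2
    ring
  -- limit of the slow variable
  have hU : Tendsto (fun t => ∑ k, (Real.exp ((lam ⟨1, h1N⟩ - lam k) * t) * (z 0 ⬝ᵥ v k)) • v k)
      atTop (nhds (∑ k, (if lam k = lam ⟨1, h1N⟩ then (z 0 ⬝ᵥ v k) else 0) • v k)) := by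
    refine tendsto_finset_sum _ fun k _ => ?_
    by_cases hk : lam k = lam ⟨1, h1N⟩
    · simp only [hk, sub_self, zero_mul, Real.exp_zero, one_mul, if_pos]
      exact tendsto_const_nhds
    · rw [if_neg hk]
      by_cases hk0 : k = ⟨0, h0N⟩
      · subst hk0
        simp only [hc0, mul_zero, zero_smul]
        exact tendsto_const_nhds
      · have hk1 : (⟨1, h1N⟩ : Fin N) ≤ k := by
          rcases Nat.eq_zero_or_pos k.val with h | h
          · exact absurd (Fin.ext h) hk0
          · exact h
        have hlt : lam ⟨1, h1N⟩ < lam k := lt_of_le_of_ne (hmono hk1) (Ne.symm hk)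
        have h1 : Tendsto (fun t : ℝ => (lam k - lam ⟨1, h1N⟩) * t) atTop atTop :=
          Tendsto.const_mul_atTop (by linarith) tendsto_id
        have h2 : Tendsto (fun t : ℝ => Real.exp ((lam ⟨1, h1N⟩ - lam k) * t)) atTop
            (nhds 0) := by
          have hcomp := Real.tendsto_exp_neg_atTop_nhds_zero.comp h1
          refine hcomp.congr fun t => ?_
          rw [Function.comp_apply]
          congr 1
          ring
        have h3 := (h2.mul_const (z 0 ⬝ᵥ v k)).smul_const (v k)
        simpa using h3
  -- the limit is a lam2-eigenvector
  have hLP : L.mulVec (∑ k, (if lam k = lam ⟨1, h1N⟩ then (z 0 ⬝ᵥ v k) else 0) • v k)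
      = lam ⟨1, h1N⟩ • ∑ k, (if lam k = lam ⟨1, h1N⟩ then (z 0 ⬝ᵥ v k) else 0) • v k := by
    have hrw : ∀ x : Fin N → ℝ, L.mulVec x = L.mulVecLin x := fun _ => rfl
    rw [hrw, map_sum, Finset.smul_sum]
    refine Finset.sum_congr rfl fun k _ => ?_
    rw [LinearMap.map_smul, ← hrw, heig k]
    by_cases hk : lam k = lam ⟨1, h1N⟩
    · rw [if_pos hk, hk, smul_comm]
    · rw [if_neg hk, zero_smul, zero_smul, smul_zero]
  have hPk0 : (∑ k, (if lam k = lam ⟨1, h1N⟩ then (z 0 ⬝ᵥ v k) else 0) • v k) ⬝ᵥ v k0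
      = z 0 ⬝ᵥ v k0 := by
    rw [sum_smul_dotProduct]
    rw [Finset.sum_eq_single k0]
    · rw [horth k0 k0, if_pos rfl, mul_one, if_pos hk0lam]
    · intro b _ hb
      rw [horth b k0, if_neg hb, mul_zero]
    · intro h
      exact absurd (Finset.mem_univ k0) h
  set P : Fin N → ℝ := ∑ k, (if lam k = lam ⟨1, h1N⟩ then (z 0 ⬝ᵥ v k) else 0) • v k with hPdef
  have hPne : P ≠ 0 := by
    intro h
    apply hk0c
    rw [← hPk0, h, zero_dotProduct]
  have hPP : (0:ℝ) < P ⬝ᵥ P := by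
    rcases lt_or_eq_of_le (Finset.sum_nonneg fun i _ => mul_self_nonneg (P i)) with h | h
    · exact h
    · exact absurd (dotProduct_self_eq_zero.mp h.symm) hPne
  have hs0 : (0:ℝ) < Real.sqrt (P ⬝ᵥ P) := Real.sqrt_pos.mpr hPP
  refine ⟨(Real.sqrt (P ⬝ᵥ P))⁻¹ • P, ?_, ?_, ?_⟩
  · rw [smul_dotProduct, dotProduct_smul, smul_eq_mul, smul_eq_mul, ← mul_assoc,
      ← mul_inv, Real.mul_self_sqrt hPP.le]
    exact inv_mul_cancel₀ hPP.ne'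
  · rw [Matrix.mulVec_smul, hLP, smul_comm]
  · have hdot : Continuous fun x : Fin N → ℝ => x ⬝ᵥ x :=
      continuous_finset_sum _ fun i _ => (continuous_apply i).mul (continuous_apply i)
    have hF : ContinuousAt (fun x : Fin N → ℝ => (Real.sqrt (x ⬝ᵥ x))⁻¹ • x) P := by
      refine ContinuousAt.fun_smul (ContinuousAt.inv₀ ?_ hs0.ne') continuousAt_id
      exact (Real.continuous_sqrt.comp hdot).continuousAt
    have hcomp := hF.tendsto.comp hU
    refine Filter.Tendsto.congr' ?_ hcomp
    filter_upwards [eventually_ge_atTop (0:ℝ)] with t ht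
    rw [Function.comp_apply]
    rw [hz_eq t ht]
    set e := Real.exp ((∫ s in (0:ℝ)..t, Λ (max s 0)) - lam ⟨1, h1N⟩ * t) with hedef
    set y := ∑ k, (Real.exp ((lam ⟨1, h1N⟩ - lam k) * t) * (z 0 ⬝ᵥ v k)) • v k with hydef
    have he : (0:ℝ) < e := Real.exp_pos _
    rw [smul_dotProduct, dotProduct_smul, smul_eq_mul, smul_eq_mul, ← mul_assoc,
      Real.sqrt_mul (mul_self_nonneg e), Real.sqrt_mul_self he.le, mul_inv, smul_smul,
      mul_comm e⁻¹, mul_assoc, inv_mul_cancel₀ he.ne', mul_one]
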